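/- arXiv:2207.08410 — 2 statements merged into one kernel-verified Lean document; each statement's English description precedes it below -/
import Mathlib

section
/- Let T, S be bounded operators on a complex Hilbert space H. Then T = S if and only if for every rank at most one operator R and every λ ∈ ℂ, the local spectral subspaces H_{TR}({λ}) and H_{SR}({λ}) coincide. -/
open scoped InnerProductSpace Pointwise
open ContinuousLinearMap

variable {H : Type*} [NormedAddCommGroup H] [InnerProductSpace ℂ H] [CompleteSpace H]

/-- The local resolvent set of `T` at `x`. -/
def localResolvent (T : H →L[ℂ] H) (x : H) : Set ℂ :=
  {μ | ∃ U : Set ℂ, IsOpen U ∧ μ ∈ U ∧ ∃ f : ℂ → H, AnalyticOnNhd ℂ f U ∧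
      ∀ z ∈ U, z • f z - T (f z) = x}

/-- The local spectrum of `T` at `x`. -/
def localSpectrum (T : H →L[ℂ] H) (x : H) : Set ℂ := (localResolvent T x)ᶜ

/-- The local spectral subspace `H_T(F)`. -/
def localSubspace (T : H →L[ℂ] H) (F : Set ℂ) : Set H :=
  {x | localSpectrum T x ⊆ F}

/-- The rank-one operator `x ⊗ y : z ↦ ⟨z,y⟩x` (inner product conjugate-linear in
the second variable, i.e. `⟪ y, z⟫` in Mathlib's convention). -/
noncomputable def rankOne (x y : H) : H →L[ℂ] H := (innerSL ℂ y).smulRight x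

/-- The single-valued extension property. -/
def HasSVEP (T : H →L[ℂ] H) : Prop :=
  ∀ U : Set ℂ, IsOpen U → ∀ f : ℂ → H, AnalyticOnNhd ℂ f U →
    (∀ μ ∈ U, μ • f μ - T (f μ) = 0) → ∀ μ ∈ U, f μ = 0

set_option linter.unusedSectionVars false
open Topology Filter

lemma rankOne_apply (x y z : H) : rankOne x y z = ⟪y, z⟫_ℂ • x := rfl

lemma mul_rankOne (T : H →L[ℂ] H) (x y : H) : T * rankOne x y = rankOne (T x) y := by
  ext z
  simp [rankOne, ContinuousLinearMap.mul_apply, map_smul]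

lemma finrank_range_rankOne (x y : H) :
    Module.finrank ℂ (LinearMap.range ((rankOne x y : H →L[ℂ] H) : H →ₗ[ℂ] H)) ≤ 1 := by
  have hle : LinearMap.range ((rankOne x y : H →L[ℂ] H) : H →ₗ[ℂ] H) ≤ ℂ ∙ x := by
    rintro _ ⟨z, rfl⟩
    exact Submodule.mem_span_singleton.2 ⟨⟪y, z⟫_ℂ, rfl⟩
  calc Module.finrank ℂ (LinearMap.range ((rankOne x y : H →L[ℂ] H) : H →ₗ[ℂ] H))
      ≤ Module.finrank ℂ (ℂ ∙ x) := Submodule.finrank_mono hle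
    _ ≤ 1 := by
        by_cases hx : x = 0
        · subst hx
          rw [Submodule.span_zero_singleton]
          simp
        · exact le_of_eq (finrank_span_singleton hx)


lemma mem_localSubspace_of_eigen (A : H →L[ℂ] H) (lam : ℂ) (u : H)
    (hu : A u = lam • u) : u ∈ localSubspace A {lam} := by
  intro μ hμ
  by_contra hne
  simp only [Set.mem_singleton_iff] at hne
  refine hμ ⟨{lam}ᶜ, isOpen_compl_singleton, hne, fun z => (z - lam)⁻¹ • u, ?_, ?_⟩
  · intro z hz
    exact ((analyticAt_id.sub analyticAt_const).inv (sub_ne_zero.2 hz)).smul analyticAt_const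
  · intro z hz
    have hz' : z - lam ≠ 0 := sub_ne_zero.2 (by exact hz)
    rw [map_smul, hu, smul_smul, smul_smul, ← sub_smul]
    have : z * (z - lam)⁻¹ - (z - lam)⁻¹ * lam = 1 := by
      field_simp
    rw [this, one_smul]

lemma eigen_of_mem_localSubspace (u₀ v u : H) (lam : ℂ) (hlam : lam ≠ 0)
    (hu : u ∈ localSubspace (rankOne u₀ v) {lam}) :
    ⟪v, u⟫_ℂ • u₀ = lam • u := by
  have h0 : (0 : ℂ) ∈ localResolvent (rankOne u₀ v) u := by
    by_contra h0
    exact hlam (Set.eq_of_mem_singleton (hu h0)).symm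
  obtain ⟨U, hUo, h0U, f, hf, heq⟩ := h0
  have e0 := heq 0 h0U
  rw [zero_smul, zero_sub, rankOne_apply] at e0
  set c : ℂ := -⟪v, f 0⟫_ℂ with hc_def
  have hu_eq : u = c • u₀ := by rw [hc_def, neg_smul]; exact e0.symm
  set α : ℂ := ⟪v, u₀⟫_ℂ with hα_def
  have hvu : ⟪v, u⟫_ℂ = c * α := by rw [hu_eq, inner_smul_right, hα_def]
  by_cases hc : c = 0
  · rw [hu_eq, hc, zero_smul]; simp
  by_cases hu₀ : u₀ = 0
  · rw [hu_eq, hu₀, smul_zero, smul_zero, smul_zero]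
  by_cases halam : α = lam
  · rw [hvu, hu_eq, smul_smul, halam, mul_comm]
  exfalso
  have hα0 : α = 0 := by
    have hα : α ∈ localResolvent (rankOne u₀ v) u := by
      by_contra h
      exact halam (Set.eq_of_mem_singleton (hu h))
    obtain ⟨U', hU'o, hαU', f', hf', heq'⟩ := hα
    have e1 := congrArg (fun w => ⟪v, w⟫_ℂ) (heq' α hαU')
    simp only [inner_sub_right, inner_smul_right, rankOne_apply, ← hα_def] at e1
    rw [hvu] at e1
    have hca : c * α = 0 := by linear_combination -e1
    exact (mul_eq_zero.1 hca).resolve_left hc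
  set g : ℂ → ℂ := fun z => ⟪v, f z⟫_ℂ with hg_def
  have hgz : ∀ z ∈ U, z * g z = 0 := by
    intro z hz
    have e2 := congrArg (fun w => ⟪v, w⟫_ℂ) (heq z hz)
    simp only [inner_sub_right, inner_smul_right, rankOne_apply, ← hα_def] at e2
    rw [hvu, hα0] at e2
    have : z * g z - g z * 0 = c * 0 := e2
    simpa using this
  have hgc : ContinuousAt g 0 :=
    ((innerSL ℂ v).continuous.continuousAt).comp (hf 0 h0U).continuousAt
  have hg0 : g 0 = 0 := by
    have h1 : Filter.Tendsto g (𝓝[≠] (0:ℂ)) (𝓝 (g 0)) :=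
      hgc.continuousWithinAt.tendsto
    have h2 : Filter.Tendsto g (𝓝[≠] (0:ℂ)) (𝓝 0) := by
      refine Filter.Tendsto.congr' ?_ tendsto_const_nhds
      filter_upwards [self_mem_nhdsWithin, nhdsWithin_le_nhds (hUo.mem_nhds h0U)] with z hz hzU
      exact ((mul_eq_zero.1 (hgz z hzU)).resolve_left hz).symm
    exact tendsto_nhds_unique h1 h2
  exact hc (by rw [hc_def, show ⟪v, f 0⟫_ℂ = g 0 from rfl, hg0, neg_zero])

theorem stmt14 (hH : ¬ FiniteDimensional ℂ H) (T S : H →L[ℂ] H) :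
    T = S ↔
      ∀ R : H →L[ℂ] H, Module.finrank ℂ (LinearMap.range (R : H →ₗ[ℂ] H)) ≤ 1 →
        ∀ lam : ℂ, localSubspace (T * R) {lam} = localSubspace (S * R) {lam} := by
  constructor
  · rintro rfl R hR lam; rfl
  · intro h
    ext x
    by_contra hne
    by_cases hT : T x = 0
    · have hS : S x ≠ 0 := fun h' => hne (by rw [hT, h'])
      have hlam : ⟪S x, S x⟫_ℂ ≠ 0 := inner_self_ne_zero.2 hS
      have hR := h (rankOne x (S x)) (finrank_range_rankOne x (S x)) ⟪S x, S x⟫_ℂ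
      rw [mul_rankOne, mul_rankOne] at hR
      have hmem : S x ∈ localSubspace (rankOne (S x) (S x)) {⟪S x, S x⟫_ℂ} :=
        mem_localSubspace_of_eigen _ _ _ (by rw [rankOne_apply])
      rw [← hR] at hmem
      have he := eigen_of_mem_localSubspace (T x) (S x) (S x) _ hlam hmem
      rw [hT, smul_zero] at he
      exact hS ((smul_eq_zero.1 he.symm).resolve_left hlam)
    · have hlam : ⟪T x, T x⟫_ℂ ≠ 0 := inner_self_ne_zero.2 hT
      have hR := h (rankOne x (T x)) (finrank_range_rankOne x (T x)) ⟪T x, T x⟫_ℂ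
      rw [mul_rankOne, mul_rankOne] at hR
      have hmem : T x ∈ localSubspace (rankOne (T x) (T x)) {⟪T x, T x⟫_ℂ} :=
        mem_localSubspace_of_eigen _ _ _ (by rw [rankOne_apply])
      rw [hR] at hmem
      have he := eigen_of_mem_localSubspace (S x) (T x) (T x) _ hlam hmem
      exact hne (smul_right_injective H hlam he).symm
end

section
/- Let A, B be bijective linear maps on a complex Hilbert space H and Φ ∈ B(H) such that ⟨x,y⟩ = ⟨Ax, Φ(By)⟩ for all x, y ∈ H. Then A is bounded (has closed graph, hence continuous), A*ΦB = I, and Φ* is invertible. -/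
open scoped InnerProductSpace Pointwise
open ContinuousLinearMap

variable {H : Type*} [NormedAddCommGroup H] [InnerProductSpace ℂ H] [CompleteSpace H]

/-!
The identity `⟪y, x⟫ = ⟪Φ (B y), A x⟫` says that `A` has an adjoint on the vectors `Φ (B y)`,
sending `Φ (B y)` to `y`; these vectors are total because `A` is onto. A linear map with an
adjoint on a total set has closed graph, so `A` is bounded by the closed graph theorem. Then
`A* Φ B = 1` with `A*` invertible and `B` onto forces `Φ`, hence `Φ*`, to be invertible.
-/

theorem Function.bijective_of_leftInverse_comp {α β γ : Type*} {f : β → γ} {g : α → β}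
    {s : γ → α} (hs : Injective s) (hg : Surjective g) (h : ∀ a, s (f (g a)) = a) :
    Bijective f := by
  have hs_bij : Bijective s := ⟨hs, fun a => ⟨f (g a), h a⟩⟩
  have hfg : Bijective (f ∘ g) := by
    rw [← hs_bij.of_comp_iff', show s ∘ f ∘ g = id from funext h]
    exact bijective_id
  exact ⟨hfg.1.of_comp_right hg, hfg.2.of_comp⟩

section InnerProductSpace

variable {𝕜 E F : Type*} [RCLike 𝕜] [NormedAddCommGroup E] [InnerProductSpace 𝕜 E]
  [NormedAddCommGroup F] [InnerProductSpace 𝕜 F]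

theorem LinearMap.isClosed_graph_of_inner_map_eq {ι : Type*} (T : E →ₗ[𝕜] F) (u : ι → E)
    (v : ι → F) (hv : ∀ w, (∀ i, ⟪v i, w⟫_𝕜 = 0) → w = 0)
    (hT : ∀ i x, ⟪v i, T x⟫_𝕜 = ⟪u i, x⟫_𝕜) :
    IsClosed (T.graph : Set (E × F)) := by
  have hgraph : (T.graph : Set (E × F)) = ⋂ i, {p | ⟪v i, p.2⟫_𝕜 = ⟪u i, p.1⟫_𝕜} := by
    ext p
    simp only [SetLike.mem_coe, LinearMap.mem_graph_iff, Set.mem_iInter, Set.mem_ofPred_eq]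
    refine ⟨fun hp i => hp ▸ hT i p.1, fun hp => ?_⟩
    rw [← sub_eq_zero]
    exact hv _ fun i => by rw [inner_sub_right, hp, hT, sub_self]
  rw [hgraph]
  exact isClosed_iInter fun i =>
    isClosed_eq ((innerSL 𝕜 (v i)).continuous.comp continuous_snd)
      ((innerSL 𝕜 (u i)).continuous.comp continuous_fst)

theorem LinearMap.continuous_of_surjective_of_inner_eq [CompleteSpace E] [CompleteSpace F]
    (T : E →ₗ[𝕜] F) (hT : Function.Surjective T) (v : E → F)
    (h : ∀ x y, ⟪y, x⟫_𝕜 = ⟪v y, T x⟫_𝕜) : Continuous T := by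
  have hv : ∀ w, (∀ y, ⟪v y, w⟫_𝕜 = 0) → w = 0 := by
    intro w hw
    obtain ⟨x, rfl⟩ := hT w
    rw [inner_self_eq_zero.mp ((h x x).trans (hw x)), map_zero]
  exact T.continuous_of_isClosed_graph
    (T.isClosed_graph_of_inner_map_eq _root_.id v hv fun y x => (h x y).symm)

theorem ContinuousLinearMap.adjoint_apply_eq_of_inner_eq [CompleteSpace E] [CompleteSpace F]
    (T : E →L[𝕜] F) {u : E} {v : F} (h : ∀ x, ⟪v, T x⟫_𝕜 = ⟪u, x⟫_𝕜) : adjoint T v = u :=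
  ext_inner_right 𝕜 fun x => by rw [adjoint_inner_left, h]

theorem ContinuousLinearMap.isUnit_adjoint_iff_bijective [CompleteSpace E] (T : E →L[𝕜] E) :
    IsUnit (adjoint T) ↔ Function.Bijective T := by
  rw [← star_eq_adjoint, isUnit_star, isUnit_iff_bijective]

end InnerProductSpace

theorem stmt18 (A B : H →ₗ[ℂ] H) (hA : Function.Bijective A)
    (hB : Function.Bijective B) (Φ : H →L[ℂ] H)
    (h : ∀ x y : H, ⟪y, x⟫_ℂ = ⟪Φ (B y), A x⟫_ℂ) :
    Continuous A ∧
    ∃ A' : H →L[ℂ] H, (∀ x, A' x = A x) ∧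
      (∀ y : H, ContinuousLinearMap.adjoint A' (Φ (B y)) = y) ∧
      ∃ Ψ : H →L[ℂ] H,
        ContinuousLinearMap.adjoint Φ * Ψ = 1 ∧ Ψ * ContinuousLinearMap.adjoint Φ = 1 := by
  have hA_cont : Continuous A := A.continuous_of_surjective_of_inner_eq hA.2 (Φ ∘ B) h
  let A' : H →L[ℂ] H := ⟨A, hA_cont⟩
  have hadj : ∀ y, adjoint A' (Φ (B y)) = y := fun y =>
    A'.adjoint_apply_eq_of_inner_eq fun x => (h x y).symm
  have hA'_adj_inj : Function.Injective (adjoint A') :=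
    (isUnit_iff_bijective.1 (A'.isUnit_adjoint_iff_bijective.2 hA)).1
  have hΦ_bij : Function.Bijective Φ :=
    Function.bijective_of_leftInverse_comp hA'_adj_inj hB.2 hadj
  exact ⟨hA_cont, A', fun _ => rfl, hadj,
    isUnit_iff_exists.1 (Φ.isUnit_adjoint_iff_bijective.2 hΦ_bij)⟩
end
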